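/- For 0 < a < 1, the positive Lyapunov exponent of the anti-symmetric cusp map equals λ₊⁽ᵃ⁾ = ∫₀^{1/2} log f₀ᵃ'(x) dx + ∫_{1/2}¹ log f₁ᵃ'(x) dx = log 2 + 1/2 + ((1-a)²/(4a))·log(1-a) − ((1+a)²/(4a))·log(1+a); moreover, for a = 1 the same integral equals 1/2. -/

import Mathlib

open Set MeasureTheory

/-- Left branch of the anti-symmetric cusp map:
`f₀ᵃ(x) = ((a+1)/(2a))·(1 - √(1 - 8ax/(a+1)²))` on `[0,1/2]`. -/
noncomputable def f0a (a x : ℝ) : ℝ :=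
  ((a + 1) / (2 * a)) * (1 - Real.sqrt (1 - 8 * a * x / (a + 1) ^ 2))

/-- Right branch of the anti-symmetric cusp map: `f₁ᵃ(x) = 1 - f₀ᵃ(1-x)` on `[1/2,1]`. -/
noncomputable def f1a (a x : ℝ) : ℝ := 1 - f0a a (1 - x)

/-- Inverse of the left branch: `g₀ᵃ(x) = ((1+a)/2)x - (a/2)x²`. -/
noncomputable def g0a (a x : ℝ) : ℝ := ((1 + a) / 2) * x - (a / 2) * x ^ 2

/-- Inverse of the right branch: `g₁ᵃ(x) = 1/2 + ((1-a)/2)x + (a/2)x²`. -/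
noncomputable def g1a (a x : ℝ) : ℝ := 1 / 2 + ((1 - a) / 2) * x + (a / 2) * x ^ 2

/-! The derivative of `f₀ᵃ` is `2 / ((1 + a) √(1 - 8ax/(1+a)²))`, and `f₁ᵃ'(x) = f₀ᵃ'(1 - x)`,
so the two integrals coincide. The substitution `y = 1 - 8ax/(1+a)²` maps `[0, 1/2]` onto
`[((1-a)/(1+a))², 1]` and turns the first integral into one of `log y`, whose antiderivative is
`y log y - y`. -/

namespace CuspMap

open Real

lemma deriv_f1a (a x : ℝ) : deriv (f1a a) x = deriv (f0a a) (1 - x) := by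
  change deriv (fun y => 1 - f0a a (1 - y)) x = _
  rw [deriv_const_sub, deriv_comp_const_sub, neg_neg]

lemma integral_Icc_comp_one_sub (g : ℝ → ℝ) :
    ∫ x in Icc (1/2 : ℝ) 1, g (1 - x) = ∫ x in Icc (0 : ℝ) (1/2), g x := by
  rw [integral_Icc_eq_integral_Ioc, integral_Icc_eq_integral_Ioc,
    ← intervalIntegral.integral_of_le (by norm_num),
    ← intervalIntegral.integral_of_le (by norm_num),
    intervalIntegral.integral_comp_sub_left]
  norm_num

lemma integral_Icc_log_deriv_f1a (a : ℝ) :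
    ∫ x in Icc (1/2 : ℝ) 1, log (deriv (f1a a) x) =
      ∫ x in Icc (0 : ℝ) (1/2), log (deriv (f0a a) x) := by
  simp_rw [deriv_f1a]
  exact integral_Icc_comp_one_sub fun y => log (deriv (f0a a) y)

lemma sqrt_arg_f0a_pos {a x : ℝ} (ha : 0 < a) (hx : x < 1 / 2) :
    0 < 1 - 8 * a * x / (a + 1) ^ 2 := by
  rw [sub_pos, div_lt_one (by positivity)]
  nlinarith [sq_nonneg (a - 1)]

lemma hasDerivAt_f0a {a x : ℝ} (ha : 0 < a) (hu : 0 < 1 - 8 * a * x / (a + 1) ^ 2) :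
    HasDerivAt (f0a a) (2 / ((a + 1) * √(1 - 8 * a * x / (a + 1) ^ 2))) x := by
  have hlin : HasDerivAt (fun y => 1 - 8 * a * y / (a + 1) ^ 2) (-(8 * a / (a + 1) ^ 2)) x := by
    simpa using (((hasDerivAt_id x).const_mul (8 * a)).div_const ((a + 1) ^ 2)).const_sub 1
  have hf : HasDerivAt (f0a a) ((a + 1) / (2 * a) *
      -(1 / (2 * √(1 - 8 * a * x / (a + 1) ^ 2)) * -(8 * a / (a + 1) ^ 2))) x :=
    (((hasDerivAt_sqrt hu.ne').comp x hlin).const_sub 1).const_mul _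
  convert hf using 1
  field_simp
  ring

lemma log_deriv_f0a {a x : ℝ} (ha : 0 < a) (hx : x < 1 / 2) :
    log (deriv (f0a a) x) = log 2 - log (a + 1) - log (1 - 8 * a / (a + 1) ^ 2 * x) / 2 := by
  have hu := sqrt_arg_f0a_pos ha hx
  rw [(hasDerivAt_f0a ha hu).deriv, log_div two_ne_zero (by positivity),
    log_mul (by linarith) (sqrt_pos.2 hu).ne', log_sqrt hu.le]
  ring_nf

lemma integral_log_deriv_f0a {a : ℝ} (ha : 0 < a) :
    ∫ x in Icc (0 : ℝ) (1/2), log (deriv (f0a a) x) =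
      (log 2 - log (a + 1)) / 2 + 1 / 4
        + (1 - a) ^ 2 / (16 * a) * log (((1 - a) / (a + 1)) ^ 2) := by
  set c := 8 * a / (a + 1) ^ 2
  have hc : c ≠ 0 := by positivity
  have hend : 1 - c * (1 / 2) = ((1 - a) / (a + 1)) ^ 2 := by
    simp only [c]
    field_simp
    ring
  calc ∫ x in Icc (0 : ℝ) (1/2), log (deriv (f0a a) x)
      = ∫ x in (0 : ℝ)..1/2, (log 2 - log (a + 1) - log (1 - c * x) / 2) := by
        -- for `a = 1` the square root vanishes at `x = 1/2`, so that endpoint must be discarded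
        rw [integral_Icc_eq_integral_Ioo, intervalIntegral.integral_of_le (by norm_num),
          integral_Ioc_eq_integral_Ioo]
        exact setIntegral_congr_fun measurableSet_Ioo fun x hx => log_deriv_f0a ha hx.2
    _ = c⁻¹ * ∫ y in ((1 - a) / (a + 1)) ^ 2..1, (log 2 - log (a + 1) - log y / 2) := by
        rw [intervalIntegral.integral_comp_sub_mul (fun y => log 2 - log (a + 1) - log y / 2) hc,
          hend, mul_zero, sub_zero, smul_eq_mul]
    _ = _ := by
        rw [intervalIntegral.integral_sub intervalIntegrable_const
            (intervalIntegral.intervalIntegrable_log'.div_const 2), intervalIntegral.integral_div,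
          integral_log, intervalIntegral.integral_const, log_one, smul_eq_mul]
        simp only [c]
        field_simp
        ring

lemma sq_mul_log_div_sq (s : ℝ) {t : ℝ} (ht : t ≠ 0) :
    s ^ 2 * log ((s / t) ^ 2) = 2 * s ^ 2 * (log s - log t) := by
  rcases eq_or_ne s 0 with rfl | hs
  · simp
  rw [log_pow, log_div hs ht]
  push_cast
  ring

lemma lyapunov_exponent_eq {a : ℝ} (ha : 0 < a) :
    (∫ x in Icc (0:ℝ) (1/2), log (deriv (f0a a) x)) +
        (∫ x in Icc (1/2:ℝ) 1, log (deriv (f1a a) x)) =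
      log 2 + 1/2 + ((1 - a) ^ 2 / (4 * a)) * log (1 - a)
        - ((1 + a) ^ 2 / (4 * a)) * log (1 + a) := by
  rw [integral_Icc_log_deriv_f1a, integral_log_deriv_f0a ha, div_mul_eq_mul_div,
    sq_mul_log_div_sq (1 - a) (by linarith), add_comm 1 a]
  field_simp
  ring

end CuspMap

/-- Since `f⁽ᵃ⁾` preserves Lebesgue measure, its positive
Lyapunov exponent is `∫₀^{1/2} log f₀ᵃ' + ∫_{1/2}¹ log f₁ᵃ'`; for `0 < a < 1` it
equals `log 2 + 1/2 + ((1-a)²/(4a)) log(1-a) - ((1+a)²/(4a)) log(1+a)`, and for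
`a = 1` the same integral equals `1/2`. -/
theorem cusp_map_lyapunov_exponent :
    (∀ a : ℝ, 0 < a → a < 1 →
      (∫ x in Icc (0:ℝ) (1/2), Real.log (deriv (f0a a) x)) +
          (∫ x in Icc (1/2:ℝ) 1, Real.log (deriv (f1a a) x)) =
        Real.log 2 + 1/2 + ((1 - a) ^ 2 / (4 * a)) * Real.log (1 - a)
          - ((1 + a) ^ 2 / (4 * a)) * Real.log (1 + a)) ∧
    (∫ x in Icc (0:ℝ) (1/2), Real.log (deriv (f0a 1) x)) +
        (∫ x in Icc (1/2:ℝ) 1, Real.log (deriv (f1a 1) x)) = 1/2 := by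
  refine ⟨fun a ha _ => CuspMap.lyapunov_exponent_eq ha, ?_⟩
  rw [CuspMap.lyapunov_exponent_eq one_pos]
  norm_num
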